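/- The completion time of a group of flows depends only on the aggregate rate function. Precisely: if r_1, …, r_n is a rate allocation for sizes s_1, …, s_n > 0 in which every flow completes (each T_i is finite), then the group completion time sup_i T_i equals inf{t : Σ_i ∫_0^t r_i(τ) dτ = Σ_i s_i}. Consequently, two rate allocations with the same aggregate rate Σ_i r_i(t) for all t, in both of which every flow completes, have equal group completion times. -/

import Mathlib

/-!
Each flow's cumulative volume is nondecreasing and never exceeds its size, so the set of times at
which flow `i` has finished is an upper set `C i` of `[0, ∞)`, and the aggregate volume reaches
`∑ s i` exactly when every flow has finished, i.e. on `⋂ i, C i`. Upper sets of a linear order are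
nested, so this intersection is the smallest `C j`, whose infimum is the largest individual
completion time.
-/

open MeasureTheory

/-- The completion time of a single flow of size `s` under rate function `r`:
`inf {t ≥ 0 : ∫_0^t r = s}`, taken in `ℝ≥0∞` so that it is `∞` if the set is empty. -/
noncomputable def flowCompletionTime (r : ℝ → ℝ) (s : ℝ) : ENNReal :=
  sInf (ENNReal.ofReal '' {t : ℝ | 0 ≤ t ∧ (∫ τ in Set.Ioc 0 t, r τ) = s})

/-- The group completion time of `n` flows: the supremum of the individual completion times. -/
noncomputable def groupCompletionTime {n : ℕ} (r : Fin n → ℝ → ℝ) (s : Fin n → ℝ) : ENNReal :=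
  ⨆ i, flowCompletionTime (r i) (s i)

/-- A rate allocation for `n` flows of sizes `s` on a single link: measurable nonnegative
rates, locally integrable, with cumulative volume never exceeding the flow sizes. -/
def IsRateAllocation {n : ℕ} (r : Fin n → ℝ → ℝ) (s : Fin n → ℝ) : Prop :=
  (∀ i, Measurable (r i)) ∧
  (∀ i t, 0 ≤ t → 0 ≤ r i t) ∧
  (∀ i t, 0 ≤ t → IntegrableOn (r i) (Set.Ioc 0 t)) ∧
  (∀ i t, 0 ≤ t → (∫ τ in Set.Ioc 0 t, r i τ) ≤ s i)

/-- Every flow completes: for each `i` there is a time `t ≥ 0` at which the cumulative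
volume of flow `i` reaches `s i`. -/
def EveryFlowCompletes {n : ℕ} (r : Fin n → ℝ → ℝ) (s : Fin n → ℝ) : Prop :=
  ∀ i, {t : ℝ | 0 ≤ t ∧ (∫ τ in Set.Ioc 0 t, r i τ) = s i}.Nonempty

open Set

theorem exists_forall_subset_of_isUpperSet {ι α : Type*} [Finite ι] [Nonempty ι] [LinearOrder α]
    {U : ι → Set α} (hU : ∀ i, IsUpperSet (U i)) : ∃ j, ∀ i, U j ⊆ U i := by
  obtain ⟨j, hj⟩ := Finite.exists_max fun i => (⟨U i, hU i⟩ : UpperSet α)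
  exact ⟨j, fun i => UpperSet.coe_subset_coe.2 (hj i)⟩

theorem sInf_image_iInter_of_isUpperSet {ι α β : Type*} [Finite ι] [Nonempty ι] [LinearOrder α]
    [CompleteLattice β] {U : ι → Set α} (hU : ∀ i, IsUpperSet (U i)) (f : α → β) :
    sInf (f '' ⋂ i, U i) = ⨆ i, sInf (f '' U i) := by
  obtain ⟨j, hj⟩ := exists_forall_subset_of_isUpperSet hU
  have hinter : ⋂ i, U i = U j := (iInter_subset U j).antisymm (subset_iInter hj)
  rw [hinter]
  exact le_antisymm (le_iSup_of_le j le_rfl)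
    (iSup_le fun i => sInf_le_sInf (image_mono (hj i)))

def completionSet (r : ℝ → ℝ) (s : ℝ) : Set ℝ :=
  {t | 0 ≤ t ∧ (∫ τ in Ioc 0 t, r τ) = s}

theorem monotoneOn_setIntegral_Ioc_zero {r : ℝ → ℝ} (hnn : ∀ t, 0 ≤ t → 0 ≤ r t)
    (hint : ∀ t, 0 ≤ t → IntegrableOn r (Ioc 0 t)) :
    MonotoneOn (fun t => ∫ τ in Ioc 0 t, r τ) (Ici 0) := by
  intro a _ b hb hab
  refine setIntegral_mono_set (hint b hb) ?_ (.of_forall (Ioc_subset_Ioc_right hab))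
  filter_upwards [ae_restrict_mem measurableSet_Ioc] with τ hτ
  exact hnn τ hτ.1.le

theorem isUpperSet_completionSet {r : ℝ → ℝ} {s : ℝ} (hnn : ∀ t, 0 ≤ t → 0 ≤ r t)
    (hint : ∀ t, 0 ≤ t → IntegrableOn r (Ioc 0 t))
    (hle : ∀ t, 0 ≤ t → (∫ τ in Ioc 0 t, r τ) ≤ s) :
    IsUpperSet (completionSet r s) := by
  rintro a b hab ⟨ha, hsa⟩
  have hb : 0 ≤ b := ha.trans hab
  refine ⟨hb, (hle b hb).antisymm ?_⟩
  calc s = ∫ τ in Ioc 0 a, r τ := hsa.symm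
    _ ≤ ∫ τ in Ioc 0 b, r τ := monotoneOn_setIntegral_Ioc_zero hnn hint ha hb hab

section RateAllocation

variable {n : ℕ} {r : Fin n → ℝ → ℝ} {s : Fin n → ℝ}

theorem IsRateAllocation.isUpperSet_completionSet (hr : IsRateAllocation r s) (i : Fin n) :
    IsUpperSet (completionSet (r i) (s i)) :=
  _root_.isUpperSet_completionSet (hr.2.1 i) (hr.2.2.1 i) (hr.2.2.2 i)

theorem IsRateAllocation.aggregate_completionSet_eq_iInter [Nonempty (Fin n)]
    (hr : IsRateAllocation r s) :
    {t : ℝ | 0 ≤ t ∧ (∑ i, ∫ τ in Ioc 0 t, r i τ) = ∑ i, s i} =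
      ⋂ i, completionSet (r i) (s i) := by
  ext t
  simp only [completionSet, mem_iInter, Set.mem_ofPred_eq]
  constructor
  · rintro ⟨ht, hsum⟩ i
    exact ⟨ht, (Finset.sum_eq_sum_iff_of_le fun j _ => hr.2.2.2 j t ht).1 hsum i
      (Finset.mem_univ i)⟩
  · intro h
    obtain ⟨i⟩ := ‹Nonempty (Fin n)›
    exact ⟨(h i).1, Finset.sum_congr rfl fun j _ => (h j).2⟩

theorem IsRateAllocation.groupCompletionTime_eq (hr : IsRateAllocation r s) :
    groupCompletionTime r s =
      sInf (ENNReal.ofReal '' {t : ℝ | 0 ≤ t ∧ (∑ i, ∫ τ in Ioc 0 t, r i τ) = ∑ i, s i}) := by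
  rcases isEmpty_or_nonempty (Fin n) with _ | _
  · have hzero : (0 : ENNReal) ∈ ENNReal.ofReal ''
        {t : ℝ | 0 ≤ t ∧ (∑ i, ∫ τ in Ioc 0 t, r i τ) = ∑ i, s i} :=
      ⟨0, ⟨le_rfl, by simp⟩, ENNReal.ofReal_zero⟩
    rw [groupCompletionTime, iSup_of_empty, nonpos_iff_eq_zero.1 (sInf_le hzero), bot_eq_zero]
  · rw [hr.aggregate_completionSet_eq_iInter,
      sInf_image_iInter_of_isUpperSet hr.isUpperSet_completionSet]
    rfl

theorem IsRateAllocation.sum_setIntegral_Ioc_eq {r' : Fin n → ℝ → ℝ} {s' : Fin n → ℝ}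
    (hr : IsRateAllocation r s) (hr' : IsRateAllocation r' s')
    (hsum : ∀ t, 0 ≤ t → (∑ i, r i t) = ∑ i, r' i t) {t : ℝ} (ht : 0 ≤ t) :
    (∑ i, ∫ τ in Ioc 0 t, r i τ) = ∑ i, ∫ τ in Ioc 0 t, r' i τ := by
  rw [← integral_finsetSum _ fun i _ => hr.2.2.1 i t ht,
    ← integral_finsetSum _ fun i _ => hr'.2.2.1 i t ht]
  exact setIntegral_congr_fun measurableSet_Ioc fun τ hτ => hsum τ hτ.1.le

end RateAllocation

theorem group_completion_time_depends_only_on_aggregate_general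
    {n : ℕ} (s : Fin n → ℝ) :
    (∀ r : Fin n → ℝ → ℝ, IsRateAllocation r s → EveryFlowCompletes r s →
      groupCompletionTime r s =
        sInf (ENNReal.ofReal ''
          {t : ℝ | 0 ≤ t ∧ (∑ i, ∫ τ in Set.Ioc 0 t, r i τ) = ∑ i, s i})) ∧
    (∀ r r' : Fin n → ℝ → ℝ, IsRateAllocation r s → IsRateAllocation r' s →
      EveryFlowCompletes r s → EveryFlowCompletes r' s →
      (∀ t, 0 ≤ t → (∑ i, r i t) = ∑ i, r' i t) →
      groupCompletionTime r s = groupCompletionTime r' s) := by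
  refine ⟨fun r hr _ => hr.groupCompletionTime_eq, fun r r' hr hr' _ _ hsum => ?_⟩
  rw [hr.groupCompletionTime_eq, hr'.groupCompletionTime_eq]
  congr 2
  ext t
  exact and_congr_right fun ht => by rw [hr.sum_setIntegral_Ioc_eq hr' hsum ht]

/-- The completion time of a group of flows depends only on the aggregate rate function:
if every flow completes, the group completion time `sup_i T_i` equals
`inf {t : Σ_i ∫_0^t r_i = Σ_i s_i}`; consequently two allocations with the same aggregate
rate, in both of which every flow completes, have equal group completion times. -/
theorem group_completion_time_depends_only_on_aggregate
    {n : ℕ} (s : Fin n → ℝ) (hs : ∀ i, 0 < s i) :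
    (∀ r : Fin n → ℝ → ℝ, IsRateAllocation r s → EveryFlowCompletes r s →
      groupCompletionTime r s =
        sInf (ENNReal.ofReal ''
          {t : ℝ | 0 ≤ t ∧ (∑ i, ∫ τ in Set.Ioc 0 t, r i τ) = ∑ i, s i})) ∧
    (∀ r r' : Fin n → ℝ → ℝ, IsRateAllocation r s → IsRateAllocation r' s →
      EveryFlowCompletes r s → EveryFlowCompletes r' s →
      (∀ t, 0 ≤ t → (∑ i, r i t) = ∑ i, r' i t) →
      groupCompletionTime r s = groupCompletionTime r' s) :=
  group_completion_time_depends_only_on_aggregate_general s
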